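/- If μ ⪯ μ' and v is a move that can be applied to μ, then vμ ⪯ v̄μ', where v̄ is the extreme move on the interval of v. -/

import Mathlib

/-- The total mass of `μ` on a set `A` of positions. -/
noncomputable def mass (μ : ℝ →₀ ℝ) (A : Set ℝ) : ℝ :=
  ∑ x ∈ μ.support, Set.indicator A μ x

/-- The `j`-th moment of a finitely supported mass function. -/
noncomputable def moment (j : ℕ) (μ : ℝ →₀ ℝ) : ℝ :=
  ∑ x ∈ μ.support, μ x * x ^ j

/-- The spread `S[μ] = Σ_{i<j} m_i m_j |x_i - x_j| = (1/2)·Σ_{x,y} μ(x) μ(y) |x - y|`. -/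
noncomputable def spread (μ : ℝ →₀ ℝ) : ℝ :=
  (1 / 2) * ∑ x ∈ μ.support, ∑ y ∈ μ.support, μ x * μ y * |x - y|

/-- A distribution: finitely supported, nonnegative, not identically zero. -/
def IsDistribution (μ : ℝ →₀ ℝ) : Prop :=
  (∀ x, 0 ≤ μ x) ∧ μ ≠ 0

/-- A move `([a, a+1], δ)`: a signed distribution `δ` supported in `[a, a+1]`
with vanishing total mass and first moment. -/
structure Move where
  a : ℝ
  δ : ℝ →₀ ℝ
  supp_subset : ∀ x, δ x ≠ 0 → a ≤ x ∧ x ≤ a + 1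
  m0 : moment 0 δ = 0
  m1 : moment 1 δ = 0

/-- The center of a move. -/
noncomputable def Move.center (v : Move) : ℝ := v.a + 1 / 2

/-- `μ 0, μ 1, …, μ ℓ` is a sequence of distributions obtained by applying the
moves `v 0, …, v (ℓ-1)` in order (each move applicable, i.e. each result is a
distribution). -/
def IsMoveSeq (ℓ : ℕ) (v : ℕ → Move) (μ : ℕ → ℝ →₀ ℝ) : Prop :=
  (∀ i ≤ ℓ, IsDistribution (μ i)) ∧ ∀ i < ℓ, μ (i + 1) = μ i + (v i).δ

/-- `μ_max(A) = max_{0 ≤ i ≤ ℓ} μ_i(A)`. -/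
noncomputable def muMax (ℓ : ℕ) (μ : ℕ → ℝ →₀ ℝ) (A : Set ℝ) : ℝ :=
  (Finset.range (ℓ + 1)).sup' (Finset.nonempty_range_iff.mpr (Nat.succ_ne_zero ℓ))
    (fun i => mass (μ i) A)

open scoped Classical in
/-- The number of moves among `v 0, …, v (ℓ-1)` whose center lies in `(a, ∞)`. -/
noncomputable def movesBeyond (ℓ : ℕ) (v : ℕ → Move) (a : ℝ) : ℕ :=
  ((Finset.range ℓ).filter (fun i => a < (v i).center)).card

/-- A sequence of moves is weight-constrained (w.r.t. the generated sequence of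
distributions) if for every `a` the number of moves centered in `(a, ∞)` is at
most `μ_max{x > a}`. -/
def WeightConstrained (ℓ : ℕ) (v : ℕ → Move) (μ : ℕ → ℝ →₀ ℝ) : Prop :=
  ∀ a : ℝ, (movesBeyond ℓ v a : ℝ) ≤ muMax ℓ μ {x | a < x}

/-- `μ'` is a basic split of `μ`: one point mass `(x, μ x)` of `μ` is replaced by
finitely many point masses of positive mass with total mass `μ x` and center of
mass at `x`, the remaining point masses being unchanged. -/
def BasicSplit (μ μ' : ℝ →₀ ℝ) : Prop :=
  ∃ (x : ℝ) (ν : ℝ →₀ ℝ), 0 < μ x ∧ (∀ y, 0 ≤ ν y) ∧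
    moment 0 ν = μ x ∧ moment 1 ν = μ x * x ∧ μ' = μ.erase x + ν

/-- `μ ⪯ μ'` : `μ'` is obtained from `μ` by finitely many basic splits. -/
def Splits (μ μ' : ℝ →₀ ℝ) : Prop := Relation.ReflTransGen BasicSplit μ μ'

/-- `ν` is the result of the extreme move on `[a, b]` applied to `μ`: `ν` agrees
with `μ` outside `[a, b]`, vanishes on `(a, b)`, and has the same total mass and
first moment as `μ` (so all mass in `[a, b]` is moved to the endpoints). -/
def IsExtremeMoveOn (a b : ℝ) (μ ν : ℝ →₀ ℝ) : Prop :=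
  (∀ x, x ∉ Set.Icc a b → ν x = μ x) ∧
  (∀ x, x ∈ Set.Ioo a b → ν x = 0) ∧
  moment 0 ν = moment 0 μ ∧ moment 1 ν = moment 1 μ

/-!
Write `v̄` for the extreme move on `[a, b]`. The move `v` changes `μ` only inside `[a, b]` and
preserves the mass and first moment there, so `v̄(vμ) = v̄μ`; splitting every mass inside `[a, b]`
to the two endpoints shows `vμ ⪯ v̄(vμ)`. It remains to see that `v̄` is monotone for `⪯`, and it
suffices to check one basic split of a mass at `x` into `ν`. If `x ∉ [a, b]`, the mass at `x`
splits into `v̄ν`. If `x ∈ [a, b]`, `v̄` sends that mass to masses at `a` and `b`, and these must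
be split into `v̄ν`, which has the same mass and center and lives outside `(a, b)`: writing
`v̄ν = L + R` with `L` left of `a` and `R` right of `b`, each endpoint takes the unique nonnegative
combination of `L` and `R` with its mass and center.
-/

open Finsupp (single)

section Moments

variable {μ : ℝ →₀ ℝ}

theorem moment_eq_linearCombination (j : ℕ) (μ : ℝ →₀ ℝ) :
    moment j μ = Finsupp.linearCombination ℝ (· ^ j) μ := by
  simp [moment, Finsupp.linearCombination_apply, Finsupp.sum]

theorem moment_add (j : ℕ) (μ ν : ℝ →₀ ℝ) : moment j (μ + ν) = moment j μ + moment j ν := by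
  simp only [moment_eq_linearCombination, map_add]

theorem moment_sub (j : ℕ) (μ ν : ℝ →₀ ℝ) : moment j (μ - ν) = moment j μ - moment j ν := by
  simp only [moment_eq_linearCombination, map_sub]

theorem moment_smul (j : ℕ) (c : ℝ) (μ : ℝ →₀ ℝ) : moment j (c • μ) = c * moment j μ := by
  simp only [moment_eq_linearCombination, map_smul, smul_eq_mul]

theorem moment_single (j : ℕ) (x m : ℝ) : moment j (single x m) = m * x ^ j := by
  simp [moment_eq_linearCombination]

theorem moment_zero_nonneg (hμ : ∀ x, 0 ≤ μ x) : 0 ≤ moment 0 μ :=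
  Finset.sum_nonneg fun x _ => by simpa using hμ x

theorem eq_zero_of_moment_zero_eq_zero (hμ : ∀ x, 0 ≤ μ x) (h : moment 0 μ = 0) : μ = 0 := by
  simp only [moment, pow_zero, mul_one] at h
  have hzero := (Finset.sum_eq_zero_iff_of_nonneg fun x _ => hμ x).mp h
  ext x
  by_cases hx : x ∈ μ.support
  · exact hzero x hx
  · simpa using hx

theorem moment_one_le_mul_moment_zero {c : ℝ} (hμ : ∀ x, 0 ≤ μ x)
    (hc : ∀ x ∈ μ.support, x ≤ c) : moment 1 μ ≤ c * moment 0 μ := by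
  rw [moment, moment, Finset.mul_sum]
  refine Finset.sum_le_sum fun x hx => ?_
  have := mul_le_mul_of_nonneg_left (hc x hx) (hμ x)
  simpa [mul_comm c] using this

theorem mul_moment_zero_le_moment_one {c : ℝ} (hμ : ∀ x, 0 ≤ μ x)
    (hc : ∀ x ∈ μ.support, c ≤ x) : c * moment 0 μ ≤ moment 1 μ := by
  rw [moment, moment, Finset.mul_sum]
  refine Finset.sum_le_sum fun x hx => ?_
  have := mul_le_mul_of_nonneg_left (hc x hx) (hμ x)
  simpa [mul_comm c] using this

end Moments

section Nonneg

variable {α M : Type*} [Zero M] [Preorder M] {f : α →₀ M}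

theorem filter_apply_nonneg (hf : ∀ x, 0 ≤ f x) (p : α → Prop) [DecidablePred p] (y : α) :
    0 ≤ f.filter p y := by
  rw [Finsupp.filter_apply]
  split_ifs
  exacts [hf y, le_rfl]

theorem erase_apply_nonneg [DecidableEq α] (hf : ∀ x, 0 ≤ f x) (x y : α) : 0 ≤ f.erase x y := by
  rw [Finsupp.erase_apply]
  split_ifs
  exacts [le_rfl, hf y]

end Nonneg

section Splitting

variable {μ μ' η η' : ℝ →₀ ℝ}

theorem Splits.nonneg (h : Splits μ μ') (hμ : ∀ x, 0 ≤ μ x) : ∀ x, 0 ≤ μ' x := by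
  induction h with
  | refl => exact hμ
  | tail _ hstep ih =>
    obtain ⟨x, ν, -, hν, -, -, rfl⟩ := hstep
    classical
    exact fun y => add_nonneg (erase_apply_nonneg ih x y) (hν y)

theorem splits_single {x m : ℝ} {ν : ℝ →₀ ℝ} (hν : ∀ y, 0 ≤ ν y) (h0 : moment 0 ν = m)
    (h1 : moment 1 ν = m * x) : Splits (single x m) ν := by
  rcases (h0 ▸ moment_zero_nonneg hν : 0 ≤ m).eq_or_lt with rfl | hm
  · rw [eq_zero_of_moment_zero_eq_zero hν h0, Finsupp.single_zero]
    exact .refl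
  · exact .single ⟨x, ν, by simpa using hm, hν, by simpa using h0, by simpa using h1, by simp⟩

theorem BasicSplit.add_left (hη : ∀ x, 0 ≤ η x) (h : BasicSplit μ μ') :
    BasicSplit (η + μ) (η + μ') := by
  obtain ⟨x, ν, hx, hν, h0, h1, rfl⟩ := h
  refine ⟨x, single x (η x) + ν, ?_,
    fun y => add_nonneg (Finsupp.single_nonneg.mpr (hη x) y) (hν y), ?_, ?_, ?_⟩
  · simpa using add_pos_of_nonneg_of_pos (hη x) hx
  · simp [moment_add, moment_single, h0]
  · simp [moment_add, moment_single, h1]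
    ring
  · conv_lhs => rw [← Finsupp.erase_add_single x η]
    rw [Finsupp.erase_add]
    abel

theorem Splits.add_left (hη : ∀ x, 0 ≤ η x) (h : Splits μ μ') : Splits (η + μ) (η + μ') := by
  induction h with
  | refl => exact .refl
  | tail _ hstep ih => exact ih.tail (hstep.add_left hη)

theorem Splits.add (hμ : ∀ x, 0 ≤ μ x) (hη : ∀ x, 0 ≤ η x) (h : Splits μ μ')
    (h' : Splits η η') : Splits (μ + η) (μ' + η') := by
  have h₁ : Splits (μ + η) (μ + η') := h'.add_left hμ
  have h₂ : Splits (η' + μ) (η' + μ') := h.add_left (h'.nonneg hη)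
  rw [add_comm η', add_comm η'] at h₂
  exact h₁.trans h₂

theorem Splits.sum {ι : Type*} (s : Finset ι) {f g : ι → ℝ →₀ ℝ}
    (hf : ∀ i ∈ s, ∀ x, 0 ≤ f i x) (h : ∀ i ∈ s, Splits (f i) (g i)) :
    Splits (∑ i ∈ s, f i) (∑ i ∈ s, g i) := by
  classical
  induction s using Finset.induction_on with
  | empty => exact .refl
  | insert i s hi ih =>
    rw [Finset.sum_insert hi, Finset.sum_insert hi]
    have hfs : ∀ j ∈ s, ∀ x, 0 ≤ f j x := fun j hj => hf j (Finset.mem_insert_of_mem hj)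
    refine Splits.add (hf i (Finset.mem_insert_self i s)) (fun x => ?_)
      (h i (Finset.mem_insert_self i s)) (ih hfs fun j hj => h j (Finset.mem_insert_of_mem hj))
    rw [Finsupp.finsetSum_apply]
    exact Finset.sum_nonneg fun j hj => hfs j hj x

end Splitting

section Extremize

variable {a b : ℝ} {μ ν : ℝ →₀ ℝ}

open scoped Classical in
/-- `extremize a b μ` is `v̄μ` for the extreme move `v̄` on `[a, b]`. -/
noncomputable def extremize (a b : ℝ) (μ : ℝ →₀ ℝ) : ℝ →₀ ℝ :=
  μ.filter (· ∉ Set.Icc a b)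
    + single a ((b * moment 0 (μ.filter (· ∈ Set.Icc a b))
        - moment 1 (μ.filter (· ∈ Set.Icc a b))) / (b - a))
    + single b ((moment 1 (μ.filter (· ∈ Set.Icc a b))
        - a * moment 0 (μ.filter (· ∈ Set.Icc a b))) / (b - a))

theorem isExtremeMoveOn_extremize (hab : a < b) (μ : ℝ →₀ ℝ) :
    IsExtremeMoveOn a b μ (extremize a b μ) := by
  classical
  have hba : b - a ≠ 0 := sub_ne_zero.mpr hab.ne'
  have hsplit (j : ℕ) : moment j μ = moment j (μ.filter (· ∈ Set.Icc a b))
      + moment j (μ.filter (· ∉ Set.Icc a b)) := by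
    rw [← moment_add, Finsupp.filter_add_filter_not]
  refine ⟨fun x hx => ?_, fun x hx => ?_, ?_, ?_⟩
  · have hxa : a ≠ x := fun h => hx (h ▸ Set.left_mem_Icc.mpr hab.le)
    have hxb : b ≠ x := fun h => hx (h ▸ Set.right_mem_Icc.mpr hab.le)
    simp [extremize, -Set.mem_Icc, hx, hxa, hxb]
  · simp [extremize, -Set.mem_Icc, Set.Ioo_subset_Icc_self hx,
      hx.1.ne, hx.2.ne']
  · rw [extremize, moment_add, moment_add, moment_single, moment_single, hsplit 0]
    field_simp
    ring
  · rw [extremize, moment_add, moment_add, moment_single, moment_single, hsplit 1]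
    field_simp
    ring

theorem extremize_nonneg (hab : a < b) (hμ : ∀ x, 0 ≤ μ x) : ∀ x, 0 ≤ extremize a b μ x := by
  classical
  set ι := μ.filter (· ∈ Set.Icc a b)
  have hι : ∀ x, 0 ≤ ι x := filter_apply_nonneg hμ _
  have hιIcc : ∀ x ∈ ι.support, x ∈ Set.Icc a b := fun x hx => by
    by_contra h
    simp [ι, -Set.mem_Icc, h] at hx
  have hb := moment_one_le_mul_moment_zero hι fun x hx => (hιIcc x hx).2
  have ha := mul_moment_zero_le_moment_one hι fun x hx => (hιIcc x hx).1
  have hp : 0 ≤ (b * moment 0 ι - moment 1 ι) / (b - a) := div_nonneg (by linarith) (by linarith)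
  have hq : 0 ≤ (moment 1 ι - a * moment 0 ι) / (b - a) := div_nonneg (by linarith) (by linarith)
  intro x
  simp only [extremize, Finsupp.add_apply, Finsupp.filter_apply, Finsupp.single_apply]
  have := hμ x
  split_ifs <;> linarith

theorem eq_single_add_single_of_eq_zero {d : ℝ →₀ ℝ} (hab : a ≠ b)
    (hd : ∀ x, x ≠ a → x ≠ b → d x = 0) : d = single a (d a) + single b (d b) := by
  ext x
  simp only [Finsupp.add_apply, Finsupp.single_apply]
  split_ifs with hxa hxb hxb
  · exact absurd (hxa.trans hxb.symm) hab
  · rw [hxa, add_zero]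
  · rw [hxb, zero_add]
  · simpa using hd x (Ne.symm hxa) (Ne.symm hxb)

theorem IsExtremeMoveOn.unique {ν₁ ν₂ : ℝ →₀ ℝ} (h₁ : IsExtremeMoveOn a b μ ν₁)
    (h₂ : IsExtremeMoveOn a b μ ν₂) (hab : a ≠ b) : ν₁ = ν₂ := by
  obtain ⟨hout₁, hin₁, h0₁, h1₁⟩ := h₁
  obtain ⟨hout₂, hin₂, h0₂, h1₂⟩ := h₂
  set d := ν₁ - ν₂ with hd_def
  have hd : d = single a (d a) + single b (d b) := by
    refine eq_single_add_single_of_eq_zero hab fun x hxa hxb => ?_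
    simp only [d, Finsupp.sub_apply, sub_eq_zero]
    by_cases hx : x ∈ Set.Icc a b
    · have hx' : x ∈ Set.Ioo a b := ⟨hx.1.lt_of_ne' hxa, hx.2.lt_of_ne hxb⟩
      rw [hin₁ x hx', hin₂ x hx']
    · rw [hout₁ x hx, hout₂ x hx]
  have e0 : d a + d b = 0 := by
    have := moment_sub 0 ν₁ ν₂
    rw [h0₁, h0₂, sub_self, ← hd_def, hd, moment_add, moment_single,
      moment_single] at this
    linarith
  have e1 : d a * a + d b * b = 0 := by
    have := moment_sub 1 ν₁ ν₂
    rw [h1₁, h1₂, sub_self, ← hd_def, hd, moment_add, moment_single,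
      moment_single] at this
    linarith
  have hdb : d b = 0 := by
    have : (b - a) * d b = 0 := by linear_combination e1 - a * e0
    exact (mul_eq_zero.mp this).resolve_left (sub_ne_zero.mpr hab.symm)
  have hda : d a = 0 := by linear_combination e0 - hdb
  rw [hda, hdb, Finsupp.single_zero, Finsupp.single_zero, add_zero] at hd
  exact sub_eq_zero.mp hd

theorem IsExtremeMoveOn.eq_extremize (h : IsExtremeMoveOn a b μ ν) (hab : a < b) :
    ν = extremize a b μ :=
  h.unique (isExtremeMoveOn_extremize hab μ) hab.ne

theorem IsExtremeMoveOn.add {μ₁ μ₂ ν₁ ν₂ : ℝ →₀ ℝ} (h₁ : IsExtremeMoveOn a b μ₁ ν₁)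
    (h₂ : IsExtremeMoveOn a b μ₂ ν₂) : IsExtremeMoveOn a b (μ₁ + μ₂) (ν₁ + ν₂) := by
  obtain ⟨hout₁, hin₁, h0₁, h1₁⟩ := h₁
  obtain ⟨hout₂, hin₂, h0₂, h1₂⟩ := h₂
  refine ⟨fun x hx => ?_, fun x hx => ?_, ?_, ?_⟩
  · simp [hout₁ x hx, hout₂ x hx]
  · simp [hin₁ x hx, hin₂ x hx]
  · rw [moment_add, moment_add, h0₁, h0₂]
  · rw [moment_add, moment_add, h1₁, h1₂]

theorem extremize_add (hab : a < b) (μ ν : ℝ →₀ ℝ) :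
    extremize a b (μ + ν) = extremize a b μ + extremize a b ν :=
  (((isExtremeMoveOn_extremize hab μ).add (isExtremeMoveOn_extremize hab ν)).eq_extremize hab).symm

theorem Move.isExtremeMoveOn_zero (v : Move) : IsExtremeMoveOn v.a (v.a + 1) v.δ 0 := by
  refine ⟨fun x hx => ?_, fun x _ => rfl, ?_, ?_⟩
  · by_contra h
    exact hx (v.supp_subset x (Ne.symm h))
  · rw [v.m0]
    simp [moment]
  · rw [v.m1]
    simp [moment]

theorem extremize_single_of_notMem (hab : a < b) {x : ℝ} (hx : x ∉ Set.Icc a b) (m : ℝ) :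
    extremize a b (single x m) = single x m := by
  refine (IsExtremeMoveOn.eq_extremize ⟨fun _ _ => rfl, fun y hy => ?_, rfl, rfl⟩ hab).symm
  exact Finsupp.single_eq_of_ne (fun h => hx (h ▸ Set.Ioo_subset_Icc_self hy))

theorem extremize_single_of_mem (hab : a < b) {x : ℝ} (hx : x ∈ Set.Icc a b) (m : ℝ) :
    extremize a b (single x m) =
      single a (m * (b - x) / (b - a)) + single b (m * (x - a) / (b - a)) := by
  have hba : b - a ≠ 0 := sub_ne_zero.mpr hab.ne'
  refine (IsExtremeMoveOn.eq_extremize ⟨fun y hy => ?_, fun y hy => ?_, ?_, ?_⟩ hab).symm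
  · have hya : a ≠ y := fun h => hy (h ▸ Set.left_mem_Icc.mpr hab.le)
    have hyb : b ≠ y := fun h => hy (h ▸ Set.right_mem_Icc.mpr hab.le)
    have hyx : x ≠ y := fun h => hy (h ▸ hx)
    simp [hya, hyb, hyx]
  · simp [hy.1.ne, hy.2.ne']
  · rw [moment_add, moment_single, moment_single, moment_single]
    field_simp
    ring
  · rw [moment_add, moment_single, moment_single, moment_single]
    field_simp
    ring

end Extremize

section TwoPoint

variable {L R : ℝ →₀ ℝ}

theorem splits_single_smul_add_smul (hL : ∀ y, 0 ≤ L y) (hR : ∀ y, 0 ≤ R y) {x m α β : ℝ}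
    (hα : 0 ≤ α) (hβ : 0 ≤ β) (h0 : α * moment 0 L + β * moment 0 R = m)
    (h1 : α * moment 1 L + β * moment 1 R = m * x) :
    Splits (single x m) (α • L + β • R) := by
  refine splits_single (fun y => ?_) ?_ ?_
  · simpa using add_nonneg (mul_nonneg hα (hL y)) (mul_nonneg hβ (hR y))
  · rw [moment_add, moment_smul, moment_smul, h0]
  · rw [moment_add, moment_smul, moment_smul, h1]

theorem splits_single_add_single_of_le {a b p q : ℝ} (hab : a < b) (hp : 0 ≤ p) (hq : 0 ≤ q)
    (hL : ∀ y, 0 ≤ L y) (hR : ∀ y, 0 ≤ R y) (hL0 : 0 < moment 0 L) (hR0 : 0 < moment 0 R)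
    (hLa : moment 1 L ≤ a * moment 0 L) (hRb : b * moment 0 R ≤ moment 1 R)
    (h0 : moment 0 L + moment 0 R = p + q) (h1 : moment 1 L + moment 1 R = p * a + q * b) :
    Splits (single a p + single b q) (L + R) := by
  set ML := moment 0 L
  set MR := moment 0 R
  set SL := moment 1 L
  set SR := moment 1 R
  set D := ML * SR - SL * MR
  have hD : 0 < D := by
    nlinarith [mul_le_mul_of_nonneg_left hRb hL0.le, mul_le_mul_of_nonneg_right hLa hR0.le,
      mul_pos (mul_pos hL0 hR0) (sub_pos.mpr hab)]
  have hsum : L + R = ((p * (SR - a * MR) / D) • L + (p * (a * ML - SL) / D) • R)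
      + ((q * (SR - b * MR) / D) • L + (q * (b * ML - SL) / D) • R) := by
    have hαα : p * (SR - a * MR) / D + q * (SR - b * MR) / D = 1 := by
      rw [← add_div, div_eq_one_iff_eq hD.ne']
      linear_combination (-SR) * h0 + MR * h1
    have hββ : p * (a * ML - SL) / D + q * (b * ML - SL) / D = 1 := by
      rw [← add_div, div_eq_one_iff_eq hD.ne']
      linear_combination (-ML) * h1 + SL * h0
    rw [add_add_add_comm, ← add_smul, ← add_smul, hαα, hββ, one_smul, one_smul]
  rw [hsum]
  refine Splits.add (Finsupp.single_nonneg.mpr hp) (Finsupp.single_nonneg.mpr hq) ?_ ?_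
  · refine splits_single_smul_add_smul hL hR (div_nonneg (mul_nonneg hp (by nlinarith)) hD.le)
      (div_nonneg (mul_nonneg hp (by linarith)) hD.le) ?_ ?_
    · field_simp
      ring
    · field_simp
      ring
  · refine splits_single_smul_add_smul hL hR (div_nonneg (mul_nonneg hq (by linarith)) hD.le)
      (div_nonneg (mul_nonneg hq (by nlinarith)) hD.le) ?_ ?_
    · field_simp
      ring
    · field_simp
      ring

theorem splits_single_add_single {a b p q : ℝ} {W : ℝ →₀ ℝ} (hab : a < b) (hp : 0 ≤ p)
    (hq : 0 ≤ q) (hW : ∀ y, 0 ≤ W y) (hW_Ioo : ∀ y ∈ Set.Ioo a b, W y = 0)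
    (h0 : moment 0 W = p + q) (h1 : moment 1 W = p * a + q * b) :
    Splits (single a p + single b q) W := by
  rcases hp.eq_or_lt with rfl | hp
  · simpa using splits_single hW (by simpa using h0) (by simpa using h1)
  rcases hq.eq_or_lt with rfl | hq
  · simpa using splits_single hW (by simpa using h0) (by simpa using h1)
  classical
  set L := W.filter (· ≤ a)
  set R := W.filter (¬ · ≤ a)
  have hL : ∀ y, 0 ≤ L y := filter_apply_nonneg hW _
  have hR : ∀ y, 0 ≤ R y := filter_apply_nonneg hW _
  have hLa : moment 1 L ≤ a * moment 0 L := moment_one_le_mul_moment_zero hL fun y hy => by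
    by_contra h
    simp [L, h] at hy
  have hRb : b * moment 0 R ≤ moment 1 R := mul_moment_zero_le_moment_one hR fun y hy => by
    by_contra h
    have hya : a < y := by
      by_contra h'
      simp [R, h'] at hy
    simp [R, hW_Ioo y ⟨hya, not_le.mp h⟩] at hy
  have hLR : L + R = W := Finsupp.filter_add_filter_not W _
  have hM0 : moment 0 L + moment 0 R = p + q := by rw [← moment_add, hLR, h0]
  have hM1 : moment 1 L + moment 1 R = p * a + q * b := by rw [← moment_add, hLR, h1]
  -- The center of `W` lies strictly between `a` and `b`, so both sides carry mass.
  have hL0 : 0 < moment 0 L := by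
    refine (moment_zero_nonneg hL).lt_of_ne fun hL0 => ?_
    have hSL : moment 1 L = 0 := by rw [eq_zero_of_moment_zero_eq_zero hL hL0.symm]; simp [moment]
    rw [show moment 0 R = p + q by linarith, show moment 1 R = p * a + q * b by linarith] at hRb
    nlinarith [mul_pos hp (sub_pos.mpr hab)]
  have hR0 : 0 < moment 0 R := by
    refine (moment_zero_nonneg hR).lt_of_ne fun hR0 => ?_
    have hSR : moment 1 R = 0 := by rw [eq_zero_of_moment_zero_eq_zero hR hR0.symm]; simp [moment]
    rw [show moment 0 L = p + q by linarith, show moment 1 L = p * a + q * b by linarith] at hLa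
    nlinarith [mul_pos hq (sub_pos.mpr hab)]
  rw [← hLR]
  exact splits_single_add_single_of_le hab hp.le hq.le hL hR hL0 hR0 hLa hRb hM0 hM1

end TwoPoint

section ExtremizeSplits

variable {a b : ℝ} {μ μ' : ℝ →₀ ℝ}

theorem splits_extremize_self (hab : a < b) (hμ : ∀ x, 0 ≤ μ x) :
    Splits μ (extremize a b μ) := by
  have hsum : extremize a b μ = ∑ x ∈ μ.support, extremize a b (single x (μ x)) := by
    conv_lhs => rw [← Finsupp.sum_single μ]
    exact map_sum (AddMonoidHom.mk' (extremize a b) (extremize_add hab)) _ _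
  rw [hsum]
  conv_lhs => rw [← Finsupp.sum_single μ]
  refine Splits.sum μ.support (fun x _ => Finsupp.single_nonneg.mpr (hμ x)) fun x _ => ?_
  obtain ⟨-, -, h0, h1⟩ := isExtremeMoveOn_extremize hab (single x (μ x))
  exact splits_single (extremize_nonneg hab (Finsupp.single_nonneg.mpr (hμ x)))
    (by rw [h0, moment_single]; ring) (by rw [h1, moment_single]; ring)

theorem splits_extremize_single (hab : a < b) {x m : ℝ} {ν : ℝ →₀ ℝ} (hν : ∀ y, 0 ≤ ν y)
    (h0 : moment 0 ν = m) (h1 : moment 1 ν = m * x) :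
    Splits (extremize a b (single x m)) (extremize a b ν) := by
  obtain ⟨-, hIoo, he0, he1⟩ := isExtremeMoveOn_extremize hab ν
  have hm : 0 ≤ m := h0 ▸ moment_zero_nonneg hν
  by_cases hx : x ∈ Set.Icc a b
  · have hba : b - a ≠ 0 := sub_ne_zero.mpr hab.ne'
    rw [extremize_single_of_mem hab hx]
    refine splits_single_add_single hab (div_nonneg (mul_nonneg hm (by linarith [hx.2]))
      (by linarith)) (div_nonneg (mul_nonneg hm (by linarith [hx.1])) (by linarith))
      (extremize_nonneg hab hν) hIoo ?_ ?_
    · rw [he0, h0]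
      field_simp
      ring
    · rw [he1, h1]
      field_simp
      ring
  · rw [extremize_single_of_notMem hab hx]
    exact splits_single (extremize_nonneg hab hν) (he0.trans h0) (he1.trans h1)

theorem BasicSplit.extremize (hab : a < b) (h : BasicSplit μ μ') (hμ : ∀ x, 0 ≤ μ x) :
    Splits (extremize a b μ) (extremize a b μ') := by
  obtain ⟨x, ν, -, hν, h0, h1, rfl⟩ := h
  classical
  conv_lhs => rw [← Finsupp.erase_add_single x μ]
  rw [extremize_add hab, extremize_add hab]
  exact (splits_extremize_single hab hν h0 h1).add_left
    (extremize_nonneg hab (erase_apply_nonneg hμ x))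

theorem Splits.extremize (hab : a < b) (h : Splits μ μ') (hμ : ∀ x, 0 ≤ μ x) :
    Splits (extremize a b μ) (extremize a b μ') := by
  induction h with
  | refl => exact .refl
  | tail hsplit hstep ih => exact ih.trans (hstep.extremize hab (Splits.nonneg hsplit hμ))

end ExtremizeSplits

/-- **Lemma (moves vs. extreme moves and splitting).** If `μ ⪯ μ'` and `v` is a
move that can be applied to `μ`, then `vμ ⪯ v̄μ'`, where `v̄` is the extreme move
on the interval of `v`. -/
theorem move_split_extreme (v : Move) (μ μ' ν' : ℝ →₀ ℝ)
    (hμ : IsDistribution μ) (hsplit : Splits μ μ')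
    (happ : IsDistribution (μ + v.δ))
    (hext : IsExtremeMoveOn v.a (v.a + 1) μ' ν') :
    Splits (μ + v.δ) ν' := by
  have hab : v.a < v.a + 1 := lt_add_one v.a
  have hmove : extremize v.a (v.a + 1) (μ + v.δ) = extremize v.a (v.a + 1) μ := by
    simpa using
      (((isExtremeMoveOn_extremize hab μ).add v.isExtremeMoveOn_zero).eq_extremize hab).symm
  rw [hext.eq_extremize hab]
  refine (splits_extremize_self hab happ.1).trans ?_
  rw [hmove]
  exact hsplit.extremize hab hμ.1
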